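/- Let d, k be natural numbers and t : ℕ → ℕ a finitely supported function with f₀ = Σ_{r≥2} t_r and f₁ = Σ_{r≥2} r·t_r. If the inequality 2f₁ - 9f₀ + d + 4t₂ - 8k ≤ 0 holds together with the combinatorial count 4·C(k,2) + C(d,2) + 2kd = Σ_{r≥2} C(r,2)·t_r, then 8k + t₂ + 3t₃ + t₄ ≥ d + Σ_{r≥5}(2r - 9)·t_r. -/

import Mathlib

/-! Since `2 f₁ - 9 f₀ = ∑ (2r - 9) t_r` and the terms with `r < 5` contribute
`-5 t₂ - 3 t₃ - t₄`, the BMY inequality is a rearrangement of the claim. -/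

open Finset

theorem Finset.sum_filter_lt_eq_sum_range {M : Type*} [AddCommMonoid M] {S : Finset ℕ}
    {g : ℕ → M} (hg : ∀ r ∉ S, g r = 0) (n : ℕ) :
    ∑ r ∈ S.filter (· < n), g r = ∑ r ∈ range n, g r :=
  sum_subset (fun _ hr => mem_range.2 (mem_filter.1 hr).2) fun r hr hrS =>
    hg r fun hS => hrS (mem_filter.2 ⟨hS, mem_range.1 hr⟩)

theorem Finset.sum_eq_sum_range_add_sum_filter_le {M : Type*} [AddCommMonoid M]
    {S : Finset ℕ} {g : ℕ → M} (hg : ∀ r ∉ S, g r = 0) (n : ℕ) :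
    ∑ r ∈ S, g r = ∑ r ∈ range n, g r + ∑ r ∈ S.filter (n ≤ ·), g r := by
  rw [← sum_filter_lt_eq_sum_range hg n, ← sum_filter_add_sum_filter_not S (· < n)]
  simp only [not_lt]

theorem hirzebruch_type_from_BMY_general (d k : ℕ) (t : ℕ → ℕ) (S : Finset ℕ)
    (hsupp : ∀ r ∉ S, t r = 0) (hlow : ∀ r < 2, t r = 0)
    (f0 f1 : ℤ)
    (hf0 : f0 = ∑ r ∈ S, (t r : ℤ))
    (hf1 : f1 = ∑ r ∈ S, (r : ℤ) * t r)
    (hBMY : 2 * f1 - 9 * f0 + d + 4 * t 2 - 8 * k ≤ 0) :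
    (8 * k + t 2 + 3 * t 3 + t 4 : ℤ)
      ≥ d + ∑ r ∈ S.filter (fun r => 5 ≤ r), (2 * (r : ℤ) - 9) * t r := by
  have hlinear : 2 * f1 - 9 * f0 = ∑ r ∈ S, (2 * (r : ℤ) - 9) * t r := by
    simp only [hf0, hf1, mul_sum, ← sum_sub_distrib, sub_mul, mul_assoc]
  have hsplit := sum_eq_sum_range_add_sum_filter_le
    (S := S) (g := fun r => (2 * (r : ℤ) - 9) * t r) (fun r hr => by simp [hsupp r hr]) 5
  simp only [sum_range_succ, sum_range_zero, hlow 0 (by norm_num), hlow 1 (by norm_num)]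
    at hsplit
  push_cast at hsplit
  linarith

/-- Derivation of the Hirzebruch-type inequality from the BMY inequality. -/
theorem hirzebruch_type_from_BMY (d k : ℕ) (t : ℕ → ℕ) (S : Finset ℕ)
    (hsupp : ∀ r ∉ S, t r = 0) (hlow : ∀ r < 2, t r = 0)
    (f0 f1 : ℤ)
    (hf0 : f0 = ∑ r ∈ S, (t r : ℤ))
    (hf1 : f1 = ∑ r ∈ S, (r : ℤ) * t r)
    (hBMY : 2 * f1 - 9 * f0 + d + 4 * t 2 - 8 * k ≤ 0)
    (hcount : 4 * Nat.choose k 2 + Nat.choose d 2 + 2 * k * d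
      = ∑ r ∈ S, Nat.choose r 2 * t r) :
    (8 * k + t 2 + 3 * t 3 + t 4 : ℤ)
      ≥ d + ∑ r ∈ S.filter (fun r => 5 ≤ r), (2 * (r : ℤ) - 9) * t r :=
  hirzebruch_type_from_BMY_general d k t S hsupp hlow f0 f1 hf0 hf1 hBMY
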